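/- Suppose that |j|_v = 1 for every integer 1 ≤ j ≤ d (which holds whenever the residual characteristic of K is larger than d+1). Then G_v(c,a) = log⁺ max{|c|_v, |a|_v} for every (c,a) ∈ K^{d-1}. -/

import Mathlib

open Filter

noncomputable section

variable {K : Type*} [Field K]

/-- Elementary symmetric polynomial of degree `k` evaluated at `c = (c_1, …, c_{d-2})`. -/
def esymmK {n : ℕ} (c : Fin n → K) (k : ℕ) : K :=
  ∑ s ∈ Finset.powersetCard k (Finset.univ : Finset (Fin n)), ∏ i ∈ s, c i

/-- The polynomial `P_{c,a}` of degree `d = n + 2`: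
`P_{c,a}(z) = z^d/d + ∑_{j=2}^{d-1} (-1)^{d-j} σ_{d-j}(c) z^j / j + a^d`. -/
def Pca {n : ℕ} (c : Fin n → K) (a z : K) : K :=
  z ^ (n + 2) / ((n + 2 : ℕ) : K)
    + ∑ j ∈ Finset.Icc 2 (n + 1),
        ((-1 : K) ^ (n + 2 - j) * esymmK c (n + 2 - j) * z ^ j) / ((j : ℕ) : K)
    + a ^ (n + 2)

/-- The critical points `c_0 = 0, c_1, …, c_{d-2}` of `P_{c,a}`. -/
def crit {n : ℕ} (c : Fin n → K) (i : Fin (n + 1)) : K :=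
  if h : (i : ℕ) = 0 then 0 else c ⟨(i : ℕ) - 1, by have := i.isLt; omega⟩

/-- `|c|_v = max_{1 ≤ i ≤ d-2} |c_i|_v` (with value `0` when there are no `c_i`'s). -/
def cnorm {n : ℕ} (v : AbsoluteValue K ℝ) (c : Fin n → K) : ℝ :=
  Finset.fold max 0 (fun i => v (c i)) (Finset.univ : Finset (Fin n))

/-- `α_v = max_{1 ≤ j ≤ d} |j|_v⁻¹`. -/
def alphaV (v : AbsoluteValue K ℝ) (d : ℕ) : ℝ :=
  Finset.fold max 0 (fun j : ℕ => (v ((j : ℕ) : K))⁻¹) (Finset.Icc 1 d)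

/-- `C_v(c,a) = max{ |d|_v^{1/(d-1)}, |d|_v^{1/d}·|a|_v,
max_{2≤j≤d-1} (|σ_{d-j}(c)|_v · |d/j|_v)^{1/(d-j)} }`, with `d = n + 2`. -/
def Cv {n : ℕ} (v : AbsoluteValue K ℝ) (c : Fin n → K) (a : K) : ℝ :=
  max ((v (((n + 2 : ℕ) : K))) ^ ((1 : ℝ) / ((n : ℝ) + 1)))
    (max ((v (((n + 2 : ℕ) : K))) ^ ((1 : ℝ) / ((n : ℝ) + 2)) * v a)
      (Finset.fold max 0
        (fun j : ℕ =>
          (v (esymmK c (n + 2 - j)) * v (((n + 2 : ℕ) : K) / ((j : ℕ) : K)))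
            ^ ((1 : ℝ) / ((n + 2 - j : ℕ) : ℝ)))
        (Finset.Icc 2 (n + 1))))

/-- `C̃_v(c,a) = max{ |a|_v, |c|_v, C_v(c,a) }`. -/
def Ctilde {n : ℕ} (v : AbsoluteValue K ℝ) (c : Fin n → K) (a : K) : ℝ :=
  max (v a) (max (cnorm v c) (Cv v c a))

/-- `h_{c,a,v}(z) = log max{ C̃_v(c,a), |z|_v }`. -/
def hca {n : ℕ} (v : AbsoluteValue K ℝ) (c : Fin n → K) (a : K) (z : K) : ℝ :=
  Real.log (max (Ctilde v c a) (v z))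

/-- `log⁺ = max{0, log}`. -/
def logPlus (x : ℝ) : ℝ := max 0 (Real.log x)

/-- `U_i(ε, C) = {(c,a) : max{|c|_v,|a|_v} ≥ C and |P_{c,a}(c_i)|_v ≥ ε·max{|c|_v,|a|_v}^d}`. -/
def Uset {n : ℕ} (v : AbsoluteValue K ℝ) (i : Fin (n + 1)) (ε C : ℝ) :
    Set ((Fin n → K) × K) :=
  {p | C ≤ max (cnorm v p.1) (v p.2) ∧
       ε * max (cnorm v p.1) (v p.2) ^ (n + 2) ≤ v (Pca p.1 p.2 (crit p.1 i))}

/-!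
Since `|j|_v = 1` for `j ≤ d`, `C̃_v(c,a) = M := max{1, |c|_v, |a|_v}`, and the ultrametric
inequality gives `|P(z)| ≤ max{M, |z|}^d`, with `|P(z)| = |z|^d` as soon as `|z| > M`. Hence
`d⁻ᵐ h(Pᵐ z)` decreases to `g(z)`; `g ≤ log M` on the disc `|z| ≤ M`, which contains the critical
points, and `g(z) = log M` whenever `|P(z)| ≥ M^d > M`. It remains to find a critical value of
size `max{|c|, |a|}^d`. If `|a| ≥ |c|` the critical value `P(0) = a^d` does. Otherwise rescale to
`max |c_i| = 1`, which makes `a^d` negligible: if all critical values of `P_{c,0}` were `< 1`, the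
reduction of `P_{c,0}` to the residue field would have degree `d`, derivative
`z (z - c̄_1) ⋯ (z - c̄_{d-2})` and vanish at all of its critical points. A critical point of
multiplicity `k` is then a root of multiplicity `k + 1` (the residue characteristic exceeds `d`),
and counting roots forces all `c̄_i = 0`, contradicting `max |c_i| = 1`.
-/

open Polynomial

theorem Polynomial.eq_of_isRoot_of_derivative_eq_prod {F : Type*} [Field F] {f : F[X]}
    {s : Multiset F} (hder : derivative f = (s.map fun a => X - C a).prod)
    (hroot : ∀ a ∈ s, f.IsRoot a) (hdeg : f.natDegree ≤ Multiset.card s + 1)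
    (hchar : ∀ k : ℕ, 1 ≤ k → k ≤ Multiset.card s + 1 → (k : F) ≠ 0) :
    ∀ a ∈ s, ∀ b ∈ s, a = b := by
  classical
  have hf0 : f ≠ 0 := by
    rintro rfl
    refine (monic_multiset_prod_of_monic s (fun a => X - C a) fun a _ =>
      monic_X_sub_C a).ne_zero ?_
    rw [← hder, derivative_zero]
  have hmult : ∀ a ∈ s, f.roots.count a = s.count a + 1 := by
    intro a ha
    have hpos : 0 < f.rootMultiplicity a := (rootMultiplicity_pos hf0).2 (hroot a ha)
    have hle : f.rootMultiplicity a ≤ Multiset.card s + 1 :=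
      ((count_roots f).symm.le.trans (Multiset.count_le_card _ _)).trans
        (f.card_roots'.trans hdeg)
    have hD := derivative_rootMultiplicity_of_root_of_mem_nonZeroDivisors (hroot a ha)
      (mem_nonZeroDivisors_of_ne_zero (hchar _ hpos hle))
    rw [← count_roots, hder, roots_multiset_prod_X_sub_C] at hD
    rw [count_roots]
    omega
  have hcount : Multiset.card s + s.toFinset.card ≤ Multiset.card s + 1 :=
    calc Multiset.card s + s.toFinset.card = ∑ a ∈ s.toFinset, f.roots.count a := by
          rw [Finset.sum_congr rfl fun a ha => hmult a (Multiset.mem_toFinset.1 ha),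
            Finset.sum_add_distrib, Multiset.toFinset_sum_count_eq, Finset.card_eq_sum_ones]
      _ ≤ ∑ a ∈ f.roots.toFinset, f.roots.count a := by
          refine Finset.sum_le_sum_of_subset fun a ha => ?_
          rw [Multiset.mem_toFinset, mem_roots hf0]
          exact hroot a (Multiset.mem_toFinset.1 ha)
      _ ≤ Multiset.card s + 1 := by
          rw [Multiset.toFinset_sum_count_eq]
          exact f.card_roots'.trans hdeg
  intro a ha b hb
  exact Finset.card_le_one.1 (by omega) a (Multiset.mem_toFinset.2 ha) b
    (Multiset.mem_toFinset.2 hb)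

section Green

variable {X : Type*} (f : X → X) (N : X → ℝ) (R : ℝ) (d : ℕ)

-- For the maps below the sequence is antitone, so the infimum is the limit defining `g`.
def greenFun (x : X) : ℝ :=
  ⨅ m : ℕ, Real.log (max R (N (f^[m] x))) / (d : ℝ) ^ m

variable {f N R d}

lemma log_max_map_le (hR : 1 ≤ R) (hd : d ≠ 0) (hle : ∀ x, N (f x) ≤ max R (N x) ^ d)
    (x : X) : Real.log (max R (N (f x))) ≤ d * Real.log (max R (N x)) := by
  have h1 : 1 ≤ max R (N x) := hR.trans (le_max_left _ _)
  rw [← Real.log_pow]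
  exact Real.log_le_log (zero_lt_one.trans_le (hR.trans (le_max_left _ _)))
    (max_le ((le_max_left _ _).trans (le_self_pow₀ h1 hd)) (hle x))

lemma log_max_iterate_of_lt (hR : 1 ≤ R) (hd : d ≠ 0)
    (hesc : ∀ x, R < N x → N (f x) = N x ^ d) {x : X} (hx : R < N x) (m : ℕ) :
    R < N (f^[m] x) ∧ Real.log (max R (N (f^[m] x))) = d ^ m * Real.log (max R (N x)) := by
  induction m with
  | zero => simp [hx]
  | succ m ih =>
    obtain ⟨hlt, hlog⟩ := ih
    have hmap := hesc _ hlt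
    have hgt : R < N (f^[m] x) ^ d :=
      hlt.trans_le (le_self_pow₀ (hR.trans hlt.le) hd)
    rw [Function.iterate_succ_apply', hmap, max_eq_right hgt.le, Real.log_pow, pow_succ',
      mul_assoc, ← hlog, max_eq_right hlt.le]
    exact ⟨hgt, by ring⟩

lemma log_max_nonneg (hR : 1 ≤ R) (y : ℝ) : 0 ≤ Real.log (max R y) :=
  Real.log_nonneg (hR.trans (le_max_left _ _))

lemma bddBelow_greenFun_terms (hR : 1 ≤ R) (x : X) :
    BddBelow (Set.range fun m : ℕ => Real.log (max R (N (f^[m] x))) / (d : ℝ) ^ m) :=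
  ⟨0, by
    rintro _ ⟨m, rfl⟩
    exact div_nonneg (log_max_nonneg hR _) (by positivity)⟩

lemma tendsto_greenFun (hR : 1 ≤ R) (hd : d ≠ 0) (hle : ∀ x, N (f x) ≤ max R (N x) ^ d)
    (x : X) :
    Tendsto (fun m : ℕ => Real.log (max R (N (f^[m] x))) / (d : ℝ) ^ m) atTop
      (nhds (greenFun f N R d x)) := by
  refine tendsto_atTop_ciInf (antitone_nat_of_succ_le fun m => ?_) (bddBelow_greenFun_terms hR x)
  have hdpos : (0 : ℝ) < d := by positivity
  rw [Function.iterate_succ_apply', pow_succ', ← div_div,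
    div_le_div_iff_of_pos_right (by positivity), div_le_iff₀ hdpos, mul_comm]
  exact log_max_map_le hR hd hle _

lemma greenFun_nonneg (hR : 1 ≤ R) (x : X) : 0 ≤ greenFun f N R d x :=
  le_ciInf fun m => div_nonneg (log_max_nonneg hR _) (by positivity)

lemma greenFun_le_log (hR : 1 ≤ R) {x : X} (hx : N x ≤ R) :
    greenFun f N R d x ≤ Real.log R :=
  (ciInf_le (bddBelow_greenFun_terms hR x) 0).trans (by simp [hx])

lemma log_le_greenFun_of_pow_le (hR : 1 ≤ R) (hd : 1 < d)
    (hle : ∀ x, N (f x) ≤ max R (N x) ^ d) (hesc : ∀ x, R < N x → N (f x) = N x ^ d)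
    {x : X} (hx : R ^ d ≤ N (f x)) : Real.log R ≤ greenFun f N R d x := by
  rcases hR.eq_or_lt with rfl | hR1
  · rw [Real.log_one]
    exact greenFun_nonneg le_rfl x
  have hd0 : d ≠ 0 := by omega
  have hlt : R < N (f x) := (lt_self_pow₀ hR1 hd).trans_le hx
  have hdpos : (0 : ℝ) < d := by positivity
  have hlogR : Real.log R ≤ Real.log (max R (N (f x))) / d := by
    rw [le_div_iff₀ hdpos, mul_comm, ← Real.log_pow, max_eq_right hlt.le]
    exact Real.log_le_log (by positivity) hx
  refine le_ciInf fun m => ?_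
  cases m with
  | zero =>
    simpa using hlogR.trans ((div_le_iff₀ hdpos).2 (by linarith [log_max_map_le hR hd0 hle x]))
  | succ m =>
    rw [Function.iterate_succ_apply, (log_max_iterate_of_lt hR hd0 hesc hlt m).2, pow_succ,
      mul_div_mul_left _ _ (pow_ne_zero m hdpos.ne')]
    exact hlogR

end Green

section AbsoluteValue

variable {v : AbsoluteValue K ℝ} {n : ℕ}

lemma IsNonarchimedean.abv_sum_le (hv : IsNonarchimedean v) {ι : Type*} {s : Finset ι}
    {f : ι → K} {B : ℝ} (hB : 0 ≤ B) (h : ∀ i ∈ s, v (f i) ≤ B) : v (∑ i ∈ s, f i) ≤ B := by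
  rcases s.eq_empty_or_nonempty with rfl | hs
  · simpa using hB
  · exact (hv.apply_sum_le_sup hs).trans (Finset.sup'_le _ _ h)

lemma abv_esymmK_le (hv : IsNonarchimedean v) {c : Fin n → K} {B : ℝ} (hB : 0 ≤ B)
    (hc : ∀ i, v (c i) ≤ B) (k : ℕ) : v (esymmK c k) ≤ B ^ k :=
  hv.abv_sum_le (pow_nonneg hB k) fun s hs => by
    rw [map_prod, ← (Finset.mem_powersetCard.1 hs).2, ← Finset.prod_const]
    exact Finset.prod_le_prod (fun i _ => v.nonneg _) fun i _ => hc i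

lemma abv_le_cnorm (c : Fin n → K) (i : Fin n) : v (c i) ≤ cnorm v c :=
  (Finset.le_fold_max _).2 (Or.inr ⟨i, Finset.mem_univ i, le_rfl⟩)

lemma exists_abv_eq_cnorm {c : Fin n → K} (hc : 0 < cnorm v c) : ∃ i, v (c i) = cnorm v c := by
  have hne : (Finset.univ : Finset (Fin n)).Nonempty := by
    by_contra h
    simp [cnorm, Finset.not_nonempty_iff_eq_empty.1 h] at hc
  obtain ⟨i, -, hi⟩ := Finset.exists_max_image _ (fun i => v (c i)) hne
  exact ⟨i, le_antisymm (abv_le_cnorm c i)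
    ((Finset.fold_max_le _).2 ⟨v.nonneg _, fun j _ => hi j (Finset.mem_univ j)⟩)⟩

lemma cnorm_le_Ctilde (c : Fin n → K) (a : K) : cnorm v c ≤ Ctilde v c a :=
  le_max_of_le_right (le_max_left _ _)

lemma abv_le_Ctilde (c : Fin n → K) (a : K) : v a ≤ Ctilde v c a :=
  le_max_left _ _

end AbsoluteValue

section Pca

variable {v : AbsoluteValue K ℝ} {n : ℕ}

lemma esymmK_zero (c : Fin n → K) : esymmK c 0 = 1 := by
  simp [esymmK]

lemma esymmK_mul_left (u : K) (b : Fin n → K) (k : ℕ) :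
    esymmK (fun i => u * b i) k = u ^ k * esymmK b k := by
  simp only [esymmK, Finset.mul_sum]
  refine Finset.sum_congr rfl fun s hs => ?_
  rw [Finset.prod_mul_distrib, Finset.prod_const, (Finset.mem_powersetCard.1 hs).2]

lemma Pca_zero (c : Fin n → K) (a : K) : Pca c a 0 = a ^ (n + 2) := by
  rw [Pca, Finset.sum_eq_zero fun j hj => by
    rw [zero_pow (by have := (Finset.mem_Icc.1 hj).1; omega), mul_zero, zero_div]]
  simp

lemma Pca_mul_left (u : K) (b : Fin n → K) (a w : K) :
    Pca (fun i => u * b i) a (u * w) = u ^ (n + 2) * Pca b 0 w + a ^ (n + 2) := by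
  simp only [Pca, esymmK_mul_left, zero_pow (Nat.succ_ne_zero (n + 1)), add_zero, mul_add,
    Finset.mul_sum]
  congr 2
  · ring
  · refine Finset.sum_congr rfl fun j hj => ?_
    rw [show u ^ (n + 2) = u ^ (n + 2 - j) * u ^ j by
      rw [← pow_add, Nat.sub_add_cancel (by have := (Finset.mem_Icc.1 hj).2; omega)]]
    ring

lemma crit_zero (c : Fin n → K) : crit c 0 = 0 := rfl

lemma crit_succ (c : Fin n → K) (i : Fin n) : crit c i.succ = c i := by
  simp [crit]

lemma abv_crit_le_cnorm (c : Fin n → K) (i : Fin (n + 1)) :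
    v (crit c i) ≤ cnorm v c := by
  cases i using Fin.cases with
  | zero =>
    rw [crit_zero, map_zero]
    exact (Finset.le_fold_max _).2 (Or.inl le_rfl)
  | succ i => exact crit_succ c i ▸ abv_le_cnorm c i


lemma abv_Pca_lead (hj : ∀ j : ℕ, 1 ≤ j → j ≤ n + 2 → v ((j : ℕ) : K) = 1) (z : K) :
    v (z ^ (n + 2) / ((n + 2 : ℕ) : K)) = v z ^ (n + 2) := by
  rw [map_div₀, map_pow, hj _ (by omega) le_rfl, div_one]

lemma abv_Pca_sub_le (hv : IsNonarchimedean v)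
    (hj : ∀ j : ℕ, 1 ≤ j → j ≤ n + 2 → v ((j : ℕ) : K) = 1) {c : Fin n → K} {a : K} {R : ℝ}
    (hR : 0 ≤ R) (hc : ∀ i, v (c i) ≤ R) (ha : v a ≤ R) (z : K) :
    v (Pca c a z - z ^ (n + 2) / ((n + 2 : ℕ) : K)) ≤ R * max R (v z) ^ (n + 1) := by
  set B := max R (v z)
  have hRB : R ≤ B := le_max_left _ _
  have hB : 0 ≤ B := hR.trans hRB
  rw [Pca, add_assoc, add_sub_cancel_left]
  refine (hv _ _).trans (max_le (hv.abv_sum_le (by positivity) fun j hjm => ?_) ?_)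
  · obtain ⟨hj2, hjn⟩ := Finset.mem_Icc.1 hjm
    rw [map_div₀, hj j (by omega) (by omega), div_one, map_mul, map_mul, map_pow, map_pow,
      v.map_neg, map_one, one_pow, one_mul]
    calc v (esymmK c (n + 2 - j)) * v z ^ j ≤ R ^ (n + 2 - j) * B ^ j :=
          mul_le_mul (abv_esymmK_le hv hR hc _) (pow_le_pow_left₀ (v.nonneg z)
            (le_max_right _ _) j) (by positivity) (by positivity)
      _ ≤ R * B ^ (n + 1 - j) * B ^ j := by
          rw [show n + 2 - j = n + 1 - j + 1 by omega, pow_succ']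
          gcongr
      _ = R * B ^ (n + 1) := by rw [mul_assoc, ← pow_add, Nat.sub_add_cancel (by omega)]
  · rw [map_pow]
    calc v a ^ (n + 2) ≤ R ^ (n + 2) := pow_le_pow_left₀ (v.nonneg a) ha _
      _ = R * R ^ (n + 1) := by ring
      _ ≤ R * B ^ (n + 1) := by gcongr

lemma abv_Pca_le (hv : IsNonarchimedean v)
    (hj : ∀ j : ℕ, 1 ≤ j → j ≤ n + 2 → v ((j : ℕ) : K) = 1) {c : Fin n → K} {a : K} {R : ℝ}
    (hR : 0 ≤ R) (hc : ∀ i, v (c i) ≤ R) (ha : v a ≤ R) (z : K) :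
    v (Pca c a z) ≤ max R (v z) ^ (n + 2) := by
  rw [← add_sub_cancel (z ^ (n + 2) / ((n + 2 : ℕ) : K)) (Pca c a z)]
  refine (hv _ _).trans (max_le ?_ ?_)
  · rw [abv_Pca_lead hj]
    exact pow_le_pow_left₀ (v.nonneg z) (le_max_right _ _) _
  · refine (abv_Pca_sub_le hv hj hR hc ha z).trans ?_
    rw [pow_succ' _ (n + 1)]
    gcongr
    exact le_max_left _ _

lemma abv_Pca_of_lt (hv : IsNonarchimedean v)
    (hj : ∀ j : ℕ, 1 ≤ j → j ≤ n + 2 → v ((j : ℕ) : K) = 1) {c : Fin n → K} {a : K} {R : ℝ}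
    (hR : 0 ≤ R) (hc : ∀ i, v (c i) ≤ R) (ha : v a ≤ R) {z : K} (hz : R < v z) :
    v (Pca c a z) = v z ^ (n + 2) := by
  rw [← add_sub_cancel (z ^ (n + 2) / ((n + 2 : ℕ) : K)) (Pca c a z),
    hv.add_eq_left_of_lt, abv_Pca_lead hj]
  rw [abv_Pca_lead hj]
  calc _ ≤ R * max R (v z) ^ (n + 1) := abv_Pca_sub_le hv hj hR hc ha z
    _ = R * v z ^ (n + 1) := by rw [max_eq_right hz.le]
    _ < v z * v z ^ (n + 1) := mul_lt_mul_of_pos_right hz (pow_pos (hR.trans_lt hz) _)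
    _ = v z ^ (n + 2) := by ring

lemma one_le_Ctilde (hj : ∀ j : ℕ, 1 ≤ j → j ≤ n + 2 → v ((j : ℕ) : K) = 1)
    (c : Fin n → K) (a : K) : 1 ≤ Ctilde v c a :=
  le_max_of_le_right <| le_max_of_le_right <| le_max_of_le_left <| by
    rw [hj _ (by omega) le_rfl, Real.one_rpow]

lemma Ctilde_eq (hv : IsNonarchimedean v)
    (hj : ∀ j : ℕ, 1 ≤ j → j ≤ n + 2 → v ((j : ℕ) : K) = 1) (c : Fin n → K) (a : K) :
    Ctilde v c a = max 1 (max (cnorm v c) (v a)) := by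
  set M := max 1 (max (cnorm v c) (v a))
  have hM : 0 ≤ M := zero_le_one.trans (le_max_left _ _)
  have hcM : cnorm v c ≤ M := le_max_of_le_right (le_max_left _ _)
  have haM : v a ≤ M := le_max_of_le_right (le_max_right _ _)
  have hCv : Cv v c a ≤ M := by
    rw [Cv, hj _ (by omega) le_rfl, Real.one_rpow, Real.one_rpow, one_mul]
    refine max_le (le_max_left _ _) (max_le haM ((Finset.fold_max_le _).2 ⟨hM, fun j hjm => ?_⟩))
    obtain ⟨hj2, hjn⟩ := Finset.mem_Icc.1 hjm
    rw [map_div₀, hj _ (by omega) le_rfl, hj j (by omega) (by omega), div_one, mul_one, one_div]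
    calc v (esymmK c (n + 2 - j)) ^ ((n + 2 - j : ℕ) : ℝ)⁻¹
        ≤ (M ^ (n + 2 - j)) ^ ((n + 2 - j : ℕ) : ℝ)⁻¹ :=
          Real.rpow_le_rpow (v.nonneg _)
            (abv_esymmK_le hv hM (fun i => (abv_le_cnorm c i).trans hcM) _) (by positivity)
      _ = M := Real.pow_rpow_inv_natCast hM (by omega)
  exact le_antisymm (max_le haM (max_le hcM hCv))
    (max_le (one_le_Ctilde hj c a) (max_le (cnorm_le_Ctilde c a) (abv_le_Ctilde c a)))

end Pca

section Reduction

variable {n : ℕ}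

-- The leading term `X^d / d` of `P_{c,a}` is the `j = d` summand, as `σ_0(c) = 1`.
def PcaPoly (c : Fin n → K) (a : K) : K[X] :=
  ∑ j ∈ Finset.Icc 2 (n + 2), C ((-1) ^ (n + 2 - j) * esymmK c (n + 2 - j) / j) * X ^ j
    + C (a ^ (n + 2))

lemma eval_PcaPoly (c : Fin n → K) (a z : K) : (PcaPoly c a).eval z = Pca c a z := by
  rw [PcaPoly, Pca, show Finset.Icc 2 (n + 2) = insert (n + 2) (Finset.Icc 2 (n + 1)) from
    (Finset.insert_Icc_right_eq_Icc_add_one (by omega)).symm, Finset.sum_insert (by simp)]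
  simp only [eval_add, eval_finsetSum, eval_mul, eval_C, eval_pow, eval_X, Nat.sub_self,
    pow_zero, esymmK_zero, one_mul, div_mul_eq_mul_div]

lemma natDegree_PcaPoly_le (c : Fin n → K) (a : K) : (PcaPoly c a).natDegree ≤ n + 2 := by
  refine natDegree_add_le_of_degree_le (natDegree_sum_le_of_forall_le _ _ fun j hj => ?_)
    ((natDegree_C _).trans_le (Nat.zero_le _))
  exact (natDegree_C_mul_X_pow_le _ _).trans (Finset.mem_Icc.1 hj).2

lemma X_mul_prod_X_sub_C (c : Fin n → K) :
    X * ∏ i, (X - C (c i)) =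
      ∑ r ∈ Finset.range (n + 1), C ((-1) ^ r * esymmK c r) * X ^ (n + 1 - r) := by
  have hvieta := Multiset.prod_X_sub_X_eq_sum_esymm (Finset.univ.val.map c)
  rw [Multiset.map_map, Multiset.card_map, Finset.card_val, Finset.card_univ,
    Fintype.card_fin] at hvieta
  rw [Finset.prod_eq_multiset_prod, show (fun i => X - C (c i)) = (fun t => X - C t) ∘ c from rfl,
    hvieta, Finset.mul_sum]
  refine Finset.sum_congr rfl fun r hr => ?_
  rw [Finset.esymm_map_val, show n + 1 - r = n - r + 1 by
    have := Finset.mem_range.1 hr; omega]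
  simp only [esymmK, map_mul, map_pow, map_neg, map_one]
  ring

lemma derivative_PcaPoly (hK : ∀ j ∈ Finset.Icc 2 (n + 2), (j : K) ≠ 0) (c : Fin n → K)
    (a : K) : derivative (PcaPoly c a) = X * ∏ i, (X - C (c i)) := by
  rw [X_mul_prod_X_sub_C, PcaPoly, derivative_add, derivative_C, add_zero, derivative_sum]
  refine Finset.sum_nbij' (fun j => n + 2 - j) (fun r => n + 2 - r) ?_ ?_ ?_ ?_ ?_
  · intro j hj
    simp only [Finset.mem_Icc, Finset.mem_range] at hj ⊢
    omega
  · intro r hr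
    simp only [Finset.mem_Icc, Finset.mem_range] at hr ⊢
    omega
  · intro j hj
    simp only [Finset.mem_Icc] at hj
    omega
  · intro r hr
    simp only [Finset.mem_range] at hr
    omega
  · intro j hj
    rw [derivative_C_mul_X_pow, div_mul_cancel₀ _ (hK j hj)]
    congr 2
    have := Finset.mem_Icc.1 hj
    omega

end Reduction

section Residue

open scoped NNReal

variable {v : AbsoluteValue K ℝ} {n : ℕ}

def IsNonarchimedean.toValuation (hv : IsNonarchimedean v) : Valuation K ℝ≥0 where
  toFun x := ⟨v x, v.nonneg x⟩
  map_zero' := NNReal.eq v.map_zero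
  map_one' := NNReal.eq v.map_one
  map_mul' x y := NNReal.eq (v.map_mul x y)
  map_add_le_max' x y := hv x y

lemma IsNonarchimedean.residue_eq_zero_iff (hv : IsNonarchimedean v)
    (x : hv.toValuation.integer) : IsLocalRing.residue _ x = 0 ↔ v x < 1 := by
  rw [IsLocalRing.residue_eq_zero_iff, IsLocalRing.mem_maximalIdeal, mem_nonunits_iff,
    Valuation.Integer.not_isUnit_iff_valuation_lt_one]
  rfl

lemma abv_lt_one_of_abv_Pca_lt_one (hv : IsNonarchimedean v)
    (hj : ∀ j : ℕ, 1 ≤ j → j ≤ n + 2 → v ((j : ℕ) : K) = 1) {b : Fin n → K}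
    (hb : ∀ i, v (b i) ≤ 1) (hcrit : ∀ i, v (Pca b 0 (b i)) < 1) (i : Fin n) :
    v (b i) < 1 := by
  set O := hv.toValuation.integer
  let π := IsLocalRing.residue O
  let bO : Fin n → O := fun i => ⟨b i, hb i⟩
  have hK : ∀ j ∈ Finset.Icc 2 (n + 2), (j : K) ≠ 0 := fun j hjm h => by
    have := hj j (by have := (Finset.mem_Icc.1 hjm).1; omega) (Finset.mem_Icc.1 hjm).2
    rw [h, map_zero] at this
    exact zero_ne_one this
  obtain ⟨F, hF⟩ : ∃ F : O[X], F.map O.subtype = PcaPoly b 0 := by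
    have hC : ∀ x : K, v x ≤ 1 → C x ∈ lifts O.subtype := fun x hx =>
      C_mem_lifts O.subtype ⟨x, hx⟩
    rw [← mem_lifts, PcaPoly]
    refine add_mem (Subsemiring.sum_mem _ fun j hjm => mul_mem (hC _ ?_) (X_pow_mem_lifts _ _))
      (hC _ (by simp))
    obtain ⟨hj2, hjn⟩ := Finset.mem_Icc.1 hjm
    rw [map_div₀, map_mul, map_pow, v.map_neg, map_one, one_pow, one_mul, hj j (by omega) hjn,
      div_one]
    simpa using abv_esymmK_le hv zero_le_one hb (n + 2 - j)
  set f := F.map π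
  have hroot : ∀ x : O, v (Pca b 0 x) < 1 → f.IsRoot (π x) := fun x hx => by
    rw [IsRoot, eval_map, eval₂_hom, hv.residue_eq_zero_iff]
    rwa [← eval_PcaPoly, ← hF, eval_map, ← O.coe_subtype, eval₂_hom] at hx
  have hder : derivative f = X * ∏ i, (X - C (π (bO i))) := by
    have hderF : derivative F = X * ∏ i, (X - C (bO i)) := by
      refine map_injective O.subtype Subtype.val_injective ?_
      rw [← derivative_map, hF, derivative_PcaPoly hK]
      simp [Polynomial.map_prod, bO]
    simp [f, derivative_map, hderF, Polynomial.map_prod]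
  have hdeg : f.natDegree ≤ n + 2 := natDegree_map_le.trans <| by
    rw [← natDegree_map_eq_of_injective (f := O.subtype) Subtype.val_injective, hF]
    exact natDegree_PcaPoly_le b 0
  have hchar : ∀ k : ℕ, 1 ≤ k → k ≤ n + 2 → (k : IsLocalRing.ResidueField O) ≠ 0 := by
    intro k hk1 hk2
    rw [← map_natCast π, Ne, hv.residue_eq_zero_iff]
    simp [hj k hk1 hk2]
  set s : Multiset (IsLocalRing.ResidueField O) := 0 ::ₘ Finset.univ.val.map (π ∘ bO)
  have hs : Multiset.card s = n + 1 := by simp [s]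
  have hmem : π (bO i) ∈ s :=
    Multiset.mem_cons_of_mem (Multiset.mem_map.2 ⟨i, Finset.mem_univ_val i, rfl⟩)
  have heq := Polynomial.eq_of_isRoot_of_derivative_eq_prod (f := f) (s := s) ?_ ?_
    (hs ▸ hdeg) (hs ▸ hchar) _ hmem 0 (Multiset.mem_cons_self _ _)
  · exact (hv.residue_eq_zero_iff (bO i)).1 heq
  · rw [hder, Multiset.map_cons, Multiset.prod_cons, map_zero, sub_zero, Multiset.map_map,
      Finset.prod_eq_multiset_prod]
    rfl
  · intro x hx
    rcases Multiset.mem_cons.1 hx with rfl | hx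
    · simpa using hroot 0 (by simp [Pca_zero])
    · obtain ⟨k, -, rfl⟩ := Multiset.mem_map.1 hx
      exact hroot (bO k) (hcrit k)

lemma exists_abv_Pca_eq_one (hv : IsNonarchimedean v)
    (hj : ∀ j : ℕ, 1 ≤ j → j ≤ n + 2 → v ((j : ℕ) : K) = 1) {b : Fin n → K}
    (hb : ∀ i, v (b i) ≤ 1) {i₀ : Fin n} (hi₀ : v (b i₀) = 1) :
    ∃ i, v (Pca b 0 (b i)) = 1 := by
  by_contra! h
  have hlt : ∀ i, v (Pca b 0 (b i)) < 1 := fun i =>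
    (lt_of_le_of_ne (by simpa [hb i] using abv_Pca_le hv hj zero_le_one hb (by simp) (b i))
      (h i))
  exact (abv_lt_one_of_abv_Pca_lt_one hv hj hb hlt i₀).ne hi₀

lemma exists_abv_Pca_eq_cnorm_pow (hv : IsNonarchimedean v)
    (hj : ∀ j : ℕ, 1 ≤ j → j ≤ n + 2 → v ((j : ℕ) : K) = 1) {c : Fin n → K} {a : K}
    (ha : v a < cnorm v c) : ∃ i, v (Pca c a (c i)) = cnorm v c ^ (n + 2) := by
  have hpos : 0 < cnorm v c := (v.nonneg a).trans_lt ha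
  obtain ⟨i₀, hi₀⟩ := exists_abv_eq_cnorm hpos
  have hu : c i₀ ≠ 0 := v.pos_iff.1 (hi₀ ▸ hpos)
  obtain ⟨i, hi⟩ := exists_abv_Pca_eq_one hv hj (b := fun i => c i / c i₀) (i₀ := i₀)
    (fun i => by simpa [map_div₀, hi₀, div_le_one hpos] using abv_le_cnorm c i)
    (by simp [hu])
  refine ⟨i, ?_⟩
  have hscale := Pca_mul_left (c i₀) (fun i => c i / c i₀) a (c i / c i₀)
  simp only [mul_div_cancel₀ _ hu] at hscale
  have hlead : v (c i₀ ^ (n + 2) * Pca (fun i => c i / c i₀) 0 (c i / c i₀)) =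
      cnorm v c ^ (n + 2) := by
    rw [map_mul, map_pow, hi, mul_one, hi₀]
  rw [hscale, hv.add_eq_left_of_lt, hlead]
  rw [hlead, map_pow]
  exact pow_lt_pow_left₀ ha (v.nonneg a) (by omega)

lemma exists_abv_Pca_crit_eq (hv : IsNonarchimedean v)
    (hj : ∀ j : ℕ, 1 ≤ j → j ≤ n + 2 → v ((j : ℕ) : K) = 1) (c : Fin n → K) (a : K) :
    ∃ i, v (Pca c a (crit c i)) = max (cnorm v c) (v a) ^ (n + 2) := by
  rcases le_or_gt (cnorm v c) (v a) with h | h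
  · exact ⟨0, by rw [crit_zero, Pca_zero, map_pow, max_eq_right h]⟩
  · obtain ⟨i, hi⟩ := exists_abv_Pca_eq_cnorm_pow hv hj h
    exact ⟨i.succ, by rw [crit_succ, hi, max_eq_left h.le]⟩

end Residue

theorem statement6_general {K : Type*} [Field K]
    (v : AbsoluteValue K ℝ) (hv : ∀ x y : K, v (x + y) ≤ max (v x) (v y)) (n : ℕ)
    (hj : ∀ j : ℕ, 1 ≤ j → j ≤ n + 2 → v ((j : ℕ) : K) = 1) :
    ∃ g : (Fin n → K) → K → K → ℝ,
      -- `g` is the `v`-adic Green function, `g_{c,a,v}(z) = lim_m d^{-m} h_{c,a,v}(P_{c,a}^m(z))`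
      (∀ (c : Fin n → K) (a z : K),
        Tendsto (fun m : ℕ => hca v c a ((Pca c a)^[m] z) / ((n : ℝ) + 2) ^ m)
          atTop (nhds (g c a z))) ∧
      -- `G_v(c,a) = log⁺ max{|c|_v, |a|_v}`
      ∀ (c : Fin n → K) (a : K),
        (Finset.univ.sup' Finset.univ_nonempty fun i : Fin (n + 1) => g c a (crit c i))
          = logPlus (max (cnorm v c) (v a)) := by
  have hR (c : Fin n → K) (a : K) : 1 ≤ Ctilde v c a := one_le_Ctilde hj c a
  have hc (c : Fin n → K) (a : K) (i : Fin n) : v (c i) ≤ Ctilde v c a :=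
    (abv_le_cnorm c i).trans (cnorm_le_Ctilde c a)
  have hle (c : Fin n → K) (a z : K) : v (Pca c a z) ≤ max (Ctilde v c a) (v z) ^ (n + 2) :=
    abv_Pca_le hv hj (zero_le_one.trans (hR c a))
    (hc c a) (abv_le_Ctilde c a) z
  have hesc (c : Fin n → K) (a z : K) (hz : Ctilde v c a < v z) :
      v (Pca c a z) = v z ^ (n + 2) :=
    abv_Pca_of_lt hv hj (zero_le_one.trans (hR c a)) (hc c a) (abv_le_Ctilde c a) hz
  refine ⟨fun c a => greenFun (Pca c a) v (Ctilde v c a) (n + 2), fun c a z => ?_,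
    fun c a => ?_⟩
  · simpa [hca] using tendsto_greenFun (hR c a) (by omega) (hle c a) z
  obtain ⟨i, hi⟩ := exists_abv_Pca_crit_eq hv hj c a
  have hM := Ctilde_eq hv hj c a
  change _ = Real.posLog _
  rw [Real.posLog_eq_log_max_one ((v.nonneg a).trans (le_max_right _ _)), ← hM]
  refine le_antisymm (Finset.sup'_le _ _ fun k _ => greenFun_le_log (hR c a)
    ((abv_crit_le_cnorm c k).trans (cnorm_le_Ctilde c a)))
    (Finset.le_sup'_of_le _ (Finset.mem_univ i) ?_)
  rcases le_or_gt (max (cnorm v c) (v a)) 1 with h | h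
  · rw [hM, max_eq_left h, Real.log_one]
    exact greenFun_nonneg (hR c a) _
  · refine log_le_greenFun_of_pow_le (hR c a) (by omega) (hle c a) (hesc c a) ?_
    rw [hi, hM, max_eq_right h.le]

/-- if `|j|_v = 1` for every integer `1 ≤ j ≤ d`, then
`G_v(c,a) = log⁺ max{|c|_v, |a|_v}` for every `(c,a) ∈ K^{d-1}`, where
`G_v(c,a) = max_i g_{c,a,v}(c_i)` and `d = n + 2`. -/
theorem statement6 {K : Type*} [Field K] [IsAlgClosed K] [CharZero K]
    (v : AbsoluteValue K ℝ) (hv : ∀ x y : K, v (x + y) ≤ max (v x) (v y)) (n : ℕ)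
    (hj : ∀ j : ℕ, 1 ≤ j → j ≤ n + 2 → v ((j : ℕ) : K) = 1) :
    ∃ g : (Fin n → K) → K → K → ℝ,
      -- `g` is the `v`-adic Green function, `g_{c,a,v}(z) = lim_m d^{-m} h_{c,a,v}(P_{c,a}^m(z))`
      (∀ (c : Fin n → K) (a z : K),
        Tendsto (fun m : ℕ => hca v c a ((Pca c a)^[m] z) / ((n : ℝ) + 2) ^ m)
          atTop (nhds (g c a z))) ∧
      -- `G_v(c,a) = log⁺ max{|c|_v, |a|_v}`
      ∀ (c : Fin n → K) (a : K),
        (Finset.univ.sup' Finset.univ_nonempty fun i : Fin (n + 1) => g c a (crit c i))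
          = logPlus (max (cnorm v c) (v a)) :=
  statement6_general v hv n hj
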